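/- arXiv:2011.11418 — 3 statements merged into one kernel-verified Lean document; each statement's English description precedes it below -/
import Mathlib

section
/- Let V be a finite set, 𝔪 : V × V → [0,∞) a symmetric function, and 𝔪 : V → (0,∞) with 𝔪(x) = Σ_y 𝔪(x,y). Define Γ(f,g)(x) = (1/2) Σ_y (f(y)-f(x))(g(y)-g(x)) 𝔪(x,y)/𝔪(x). Then for all f : V → ℝ and λ ≥ 0, Σ_x Γ(f, e^{λf})(x) 𝔪(x) ≤ λ Σ_x e^{λ f(x)} Γ(f,f)(x) 𝔪(x). -/
/-!
Multiplying by `𝔪(x)` turns both sides into edge sums: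
`Σ_x Γ(f,g)(x) 𝔪(x) = ½ Σ_{x,y} (f y - f x)(g y - g x) 𝔪_{xy}`.
Edgewise, `(a - b)(e^{λa} - e^{λb}) ≤ (λ/2)(a - b)²(e^{λa} + e^{λb})`: the logarithmic mean of
two exponentials is at most their arithmetic mean, i.e. `tanh u ≤ u` for `u ≥ 0`. Summing, the
symmetry of `𝔪_{xy}` turns the weight `e^{λf(y)} + e^{λf(x)}` into `2 e^{λf(x)}`.
-/

open Finset

/-- Carré du champ operator on a finite weighted graph:
`Γ(f,g)(x) = (1/2) Σ_y (f(y)-f(x))(g(y)-g(x)) 𝔪_{xy}/𝔪(x)` with `𝔪(x) = Σ_y 𝔪_{xy}`. -/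
noncomputable def gam {V : Type*} [Fintype V] (w : V → V → ℝ) (f g : V → ℝ) (x : V) : ℝ :=
  (1 / 2) * ∑ y, (f y - f x) * (g y - g x) * (w x y / ∑ z, w x z)

namespace Real

theorem monotone_mul_cosh_sub_sinh : Monotone fun u => u * cosh u - sinh u := by
  refine monotone_of_hasDerivAt_nonneg (f' := fun u => u * sinh u) (fun u => ?_) fun u => ?_
  · exact (((hasDerivAt_id' u).mul (hasDerivAt_cosh u)).sub (hasDerivAt_sinh u)).congr_deriv
      (by ring)
  · rcases le_total 0 u with hu | hu
    · exact mul_nonneg hu (sinh_nonneg_iff.2 hu)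
    · exact mul_nonneg_of_nonpos_of_nonpos hu (sinh_nonpos_iff.2 hu)

theorem mul_sinh_le_sq_mul_cosh (u : ℝ) : u * sinh u ≤ u ^ 2 * cosh u := by
  have key : 0 ≤ u * (u * cosh u - sinh u) := by
    rcases le_total 0 u with hu | hu
    · exact mul_nonneg hu (by simpa using monotone_mul_cosh_sub_sinh hu)
    · exact mul_nonneg_of_nonpos_of_nonpos hu (by simpa using monotone_mul_cosh_sub_sinh hu)
  linear_combination key

theorem mul_exp_sub_exp_le (a b : ℝ) :
    (a - b) * (exp a - exp b) ≤ (a - b) ^ 2 / 2 * (exp a + exp b) := by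
  obtain ⟨m, u, rfl, rfl⟩ : ∃ m u, a = m + u ∧ b = m - u :=
    ⟨(a + b) / 2, (a - b) / 2, by ring, by ring⟩
  have hsub : exp (m + u) - exp (m - u) = 2 * exp m * sinh u := by
    rw [sinh_eq, sub_eq_add_neg m u, exp_add, exp_add]; ring
  have hadd : exp (m + u) + exp (m - u) = 2 * exp m * cosh u := by
    rw [cosh_eq, sub_eq_add_neg m u, exp_add, exp_add]; ring
  rw [hsub, hadd, add_sub_sub_cancel, ← two_mul]
  linear_combination 4 * exp m * mul_sinh_le_sq_mul_cosh u

theorem mul_exp_mul_sub_exp_mul_le {l : ℝ} (hl : 0 ≤ l) (a b : ℝ) :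
    (a - b) * (exp (l * a) - exp (l * b)) ≤
      l / 2 * ((a - b) ^ 2 * (exp (l * a) + exp (l * b))) := by
  rcases hl.eq_or_lt with rfl | hl
  · simp
  refine le_of_mul_le_mul_left ?_ hl
  linear_combination mul_exp_sub_exp_le (l * a) (l * b)

end Real

open Real

theorem sum_sum_add_mul_of_symm {V : Type*} [Fintype V] (h : V → ℝ) {φ : V → V → ℝ}
    (hφ : ∀ x y, φ x y = φ y x) :
    ∑ x, ∑ y, (h y + h x) * φ x y = 2 * ∑ x, ∑ y, h x * φ x y := by
  have hswap : ∑ x, ∑ y, h y * φ x y = ∑ x, ∑ y, h x * φ x y := by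
    rw [sum_comm]
    simp_rw [hφ]
  simp_rw [add_mul, sum_add_distrib, hswap]
  ring

section CarreDuChamp

variable {V : Type*} [Fintype V] (w : V → V → ℝ)

theorem gam_mul_sum_eq {x : V} (hx : ∑ z, w x z ≠ 0) (f g : V → ℝ) :
    gam w f g x * ∑ y, w x y = 1 / 2 * ∑ y, (f y - f x) * (g y - g x) * w x y := by
  rw [gam, mul_assoc, sum_mul]
  congr 1
  refine sum_congr rfl fun y _ => ?_
  rw [mul_assoc, div_mul_cancel₀ _ hx]

theorem sum_gam_mul_sum_eq (hw : ∀ x, ∑ z, w x z ≠ 0) (f g : V → ℝ) :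
    ∑ x, gam w f g x * ∑ y, w x y =
      1 / 2 * ∑ x, ∑ y, (f y - f x) * (g y - g x) * w x y := by
  rw [mul_sum]
  exact sum_congr rfl fun x _ => gam_mul_sum_eq w (hw x) f g

theorem sum_mul_gam_mul_sum_eq (hw : ∀ x, ∑ z, w x z ≠ 0) (h f g : V → ℝ) :
    ∑ x, h x * gam w f g x * ∑ y, w x y =
      1 / 2 * ∑ x, ∑ y, h x * ((f y - f x) * (g y - g x) * w x y) := by
  simp_rw [mul_assoc, gam_mul_sum_eq w (hw _), mul_sum]
  refine sum_congr rfl fun x _ => sum_congr rfl fun y _ => ?_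
  ring

end CarreDuChamp

theorem gamma_exp_estimate {V : Type*} [Fintype V] (w : V → V → ℝ)
    (hsym : ∀ x y, w x y = w y x) (hnn : ∀ x y, 0 ≤ w x y)
    (hpos : ∀ x, 0 < ∑ y, w x y) (f : V → ℝ) (l : ℝ) (hl : 0 ≤ l) :
    ∑ x, gam w f (fun z => Real.exp (l * f z)) x * (∑ y, w x y) ≤
      l * ∑ x, Real.exp (l * f x) * gam w f f x * (∑ y, w x y) := by
  have hw : ∀ x, ∑ z, w x z ≠ 0 := fun x => (hpos x).ne'
  have hφ : ∀ x y, (f y - f x) ^ 2 * w x y = (f x - f y) ^ 2 * w y x := fun x y => by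
    rw [hsym]; ring
  calc ∑ x, gam w f (fun z => exp (l * f z)) x * ∑ y, w x y
      = 1 / 2 * ∑ x, ∑ y, (f y - f x) * (exp (l * f y) - exp (l * f x)) * w x y :=
        sum_gam_mul_sum_eq w hw _ _
    _ ≤ 1 / 2 * ∑ x, ∑ y,
          l / 2 * ((exp (l * f y) + exp (l * f x)) * ((f y - f x) ^ 2 * w x y)) := by
        gcongr 1 / 2 * ∑ x, ∑ y, ?_ with x _ y _
        linear_combination
          mul_le_mul_of_nonneg_right (mul_exp_mul_sub_exp_mul_le hl (f y) (f x)) (hnn x y)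
    _ = l * (1 / 2 * ∑ x, ∑ y, exp (l * f x) * ((f y - f x) ^ 2 * w x y)) := by
        conv_lhs => simp only [← mul_sum]
        rw [sum_sum_add_mul_of_symm (fun z => exp (l * f z)) hφ]
        ring
    _ = l * ∑ x, exp (l * f x) * gam w f f x * ∑ y, w x y := by
        rw [sum_mul_gam_mul_sum_eq w hw]
        simp only [sq]
end

section
/- Let V be a finite set with symmetric weights 𝔪_{xy} ≥ 0 and 𝔪(x) = Σ_y 𝔪_{xy} > 0, and Γ(f,g)(x) = (1/2) Σ_y (f(y)-f(x))(g(y)-g(x)) 𝔪_{xy}/𝔪(x). Then for every f : V → ℝ, Σ_x Γ(e^f, e^f)(x) 𝔪(x) ≤ Σ_x e^{2f(x)} Γ(f,f)(x) 𝔪(x). -/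
open Finset

lemma sinh_le_mul_cosh {t : ℝ} (ht : 0 ≤ t) : Real.sinh t ≤ t * Real.cosh t := by
  have h : ∀ s ∈ Set.Ici (0:ℝ), HasDerivAt (fun u => u * Real.cosh u - Real.sinh u)
      (s * Real.sinh s) s := by
    intro s _
    have h1 : HasDerivAt (fun u : ℝ => u * Real.cosh u - Real.sinh u)
        (1 * Real.cosh s + s * Real.sinh s - Real.cosh s) s :=
      ((hasDerivAt_id s).mul (Real.hasDerivAt_cosh s)).sub (Real.hasDerivAt_sinh s)
    simpa using h1.congr_deriv (by ring)
  have hmono : MonotoneOn (fun u => u * Real.cosh u - Real.sinh u) (Set.Ici 0) := by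
    apply monotoneOn_of_deriv_nonneg (convex_Ici 0)
    · exact Continuous.continuousOn (by continuity)
    · intro s hs
      exact ((h s (interior_subset hs)).differentiableAt).differentiableWithinAt
    · intro s hs
      have hs' : s ∈ Set.Ici (0:ℝ) := le_of_lt (by simpa using hs)
      rw [(h s hs').deriv]
      exact mul_nonneg (by simpa using hs') (Real.sinh_nonneg_iff.mpr (by simpa using hs'))
  have := hmono (Set.self_mem_Ici) (by exact ht) ht
  simpa using this

lemma exp_secant {a b : ℝ} (hab : a ≤ b) :
    Real.exp b - Real.exp a ≤ (b - a) * (Real.exp a + Real.exp b) / 2 := by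
  set t : ℝ := (b - a) / 2 with htdef
  set m : ℝ := (a + b) / 2 with hmdef
  have ht : 0 ≤ t := by rw [htdef]; linarith
  have hbm : m + t = b := by rw [htdef, hmdef]; ring
  have ham : m - t = a := by rw [htdef, hmdef]; ring
  have h1 : Real.exp b - Real.exp a = 2 * Real.exp m * Real.sinh t := by
    rw [Real.sinh_eq, ← hbm, ← ham, sub_eq_add_neg m t, Real.exp_add, Real.exp_add]
    ring
  have h2 : Real.exp a + Real.exp b = 2 * Real.exp m * Real.cosh t := by
    rw [Real.cosh_eq, ← hbm, ← ham, sub_eq_add_neg m t, Real.exp_add, Real.exp_add]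
    ring
  rw [h1, h2]
  have := mul_le_mul_of_nonneg_left (sinh_le_mul_cosh ht)
    (by positivity : (0:ℝ) ≤ 2 * Real.exp m)
  calc 2 * Real.exp m * Real.sinh t ≤ 2 * Real.exp m * (t * Real.cosh t) := this
    _ = (b - a) * (2 * Real.exp m * Real.cosh t) / 2 := by rw [htdef]; ring

lemma key_ineq (a b : ℝ) :
    2 * ((Real.exp b - Real.exp a) * (Real.exp b - Real.exp a)) ≤
      (Real.exp (2 * a) + Real.exp (2 * b)) * ((b - a) * (b - a)) := by
  have habs : |Real.exp b - Real.exp a| ≤ |b - a| * (Real.exp a + Real.exp b) / 2 := by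
    rcases le_total a b with h | h
    · rw [abs_of_nonneg (sub_nonneg.mpr (Real.exp_le_exp.mpr h)), abs_of_nonneg (sub_nonneg.mpr h)]
      exact exp_secant h
    · rw [abs_of_nonpos (sub_nonpos.mpr (Real.exp_le_exp.mpr h)), abs_of_nonpos (sub_nonpos.mpr h)]
      have := exp_secant h
      nlinarith [this]
  have hsq := mul_self_le_mul_self (abs_nonneg _) habs
  rw [abs_mul_abs_self] at hsq
  have h2a : Real.exp (2 * a) = Real.exp a * Real.exp a := by rw [two_mul, Real.exp_add]
  have h2b : Real.exp (2 * b) = Real.exp b * Real.exp b := by rw [two_mul, Real.exp_add]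
  have habs2 : |b - a| * |b - a| = (b - a) * (b - a) := abs_mul_abs_self _
  nlinarith [hsq, sq_nonneg (Real.exp a - Real.exp b), sq_nonneg ((b - a) * (Real.exp a - Real.exp b))]


theorem gamma_exp_sq_estimate {V : Type*} [Fintype V] (w : V → V → ℝ)
    (hsym : ∀ x y, w x y = w y x) (hnn : ∀ x y, 0 ≤ w x y)
    (hpos : ∀ x, 0 < ∑ y, w x y) (f : V → ℝ) :
    ∑ x, gam w (fun z => Real.exp (f z)) (fun z => Real.exp (f z)) x * (∑ y, w x y) ≤
      ∑ x, Real.exp (2 * f x) * gam w f f x * (∑ y, w x y) := by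

  have hS : ∀ x : V, (∑ y, w x y) ≠ 0 := fun x => (hpos x).ne'
  have hL : ∀ (g h : V → ℝ) (x : V), gam w g h x * (∑ y, w x y)
      = (1 / 2) * ∑ y, (g y - g x) * (h y - h x) * w x y := by
    intro g h x
    rw [gam, mul_assoc, Finset.sum_mul]
    congr 1
    refine Finset.sum_congr rfl fun y _ => ?_
    rw [mul_assoc, div_mul_cancel₀ _ (hS x)]
  have key : ∀ x y : V,
      2 * ((Real.exp (f y) - Real.exp (f x)) * (Real.exp (f y) - Real.exp (f x)) * w x y) ≤
        Real.exp (2 * f x) * ((f y - f x) * (f y - f x)) * w x y +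
        Real.exp (2 * f y) * ((f x - f y) * (f x - f y)) * w y x := by
    intro x y
    rw [← hsym x y]
    have h := mul_le_mul_of_nonneg_right (key_ineq (f x) (f y)) (hnn x y)
    refine le_trans (le_of_eq (by ring)) (le_trans h (le_of_eq (by ring)))
  have hsum : ∑ x, ∑ y,
      (Real.exp (f y) - Real.exp (f x)) * (Real.exp (f y) - Real.exp (f x)) * w x y
      ≤ ∑ x, ∑ y, Real.exp (2 * f x) * ((f y - f x) * (f y - f x)) * w x y := by
    have h1 : ∑ x, ∑ y,
        2 * ((Real.exp (f y) - Real.exp (f x)) * (Real.exp (f y) - Real.exp (f x)) * w x y)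
        ≤ ∑ x, ∑ y, (Real.exp (2 * f x) * ((f y - f x) * (f y - f x)) * w x y +
            Real.exp (2 * f y) * ((f x - f y) * (f x - f y)) * w y x) :=
      Finset.sum_le_sum fun x _ => Finset.sum_le_sum fun y _ => key x y
    have h2 : ∑ x : V, ∑ y : V, Real.exp (2 * f y) * ((f x - f y) * (f x - f y)) * w y x
        = ∑ x : V, ∑ y : V, Real.exp (2 * f x) * ((f y - f x) * (f y - f x)) * w x y :=
      by rw [Finset.sum_comm]
    simp only [Finset.sum_add_distrib, ← Finset.mul_sum] at h1
    linarith [h1, h2]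
  calc ∑ x, gam w (fun z => Real.exp (f z)) (fun z => Real.exp (f z)) x * (∑ y, w x y)
      = (1 / 2) * ∑ x, ∑ y,
        (Real.exp (f y) - Real.exp (f x)) * (Real.exp (f y) - Real.exp (f x)) * w x y := by
        rw [Finset.mul_sum]
        exact Finset.sum_congr rfl fun x _ =>
          hL (fun z => Real.exp (f z)) (fun z => Real.exp (f z)) x
    _ ≤ (1 / 2) * ∑ x, ∑ y, Real.exp (2 * f x) * ((f y - f x) * (f y - f x)) * w x y :=
        mul_le_mul_of_nonneg_left hsum (by norm_num)
    _ = ∑ x, Real.exp (2 * f x) * gam w f f x * (∑ y, w x y) := by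
        rw [Finset.mul_sum]
        refine Finset.sum_congr rfl fun x _ => ?_
        rw [mul_assoc, hL f f x]
        simp only [Finset.mul_sum]
        exact Finset.sum_congr rfl fun y _ => by ring
end

section
/- Let V be a finite set with a (possibly non-symmetric) distance function d and full-support probability measure 𝔪. Let c > 0. Then the following are equivalent: (1) for every probability density ρ with respect to 𝔪, W(𝔪, ρ𝔪)² ≤ (2/c) ℰ(ρ), where ℰ(ρ) = Σ_x ρ(x) log ρ(x) 𝔪(x) and W is the Wasserstein distance for cost d; (2) for every 1-Lipschitz f with 𝔪(f) = 0 and every λ ≥ 0, 𝔪(e^{λf}) ≤ e^{λ²/(2c)}. -/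
/-
(1) ⇒ (2): apply the transport inequality to the Gibbs density ρ = e^{λf} / 𝔪(e^{λf}). Its
entropy is ℰ(ρ) = λ α - log 𝔪(e^{λf}) with α = (f, ρ𝔪) ≤ W(𝔪, ρ𝔪) (f is centred and 1-Lipschitz),
so log 𝔪(e^{λf}) ≤ λ α - (c/2) max(α, 0)² ≤ λ² / (2c).

(2) ⇒ (1): by Kantorovich–Rubinstein duality it suffices to bound α = (f, ρ𝔪) for centred
1-Lipschitz f. The variational inequality (g, ρ𝔪) ≤ ℰ(ρ) + log 𝔪(e^g) with g = cαf and the Laplace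
bound give cα² ≤ ℰ(ρ) + cα²/2.

Kantorovich–Rubinstein duality on a finite set: for t < W(ν₀, ν₁), Hahn–Banach separates the
compact convex set of (marginals, cost) of probability plans on V × V from the ray
{(ν₀, ν₁, s) : s ≤ t}. The separating functional yields potentials with φ(x) + ψ(y) ≤ d(x, y)
and (φ, ν₀) + (ψ, ν₁) ≥ t, and the c-transform of φ is a 1-Lipschitz function doing as well.
-/

open Finset

/-- `π` is a coupling of the probability measures `ν₀` and `ν₁` on a finite set. -/
def IsCoupling {V : Type*} [Fintype V] (π : V → V → ℝ) (ν₀ ν₁ : V → ℝ) : Prop :=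
  (∀ x y, 0 ≤ π x y) ∧ (∀ x, ∑ y, π x y = ν₀ x) ∧ (∀ y, ∑ x, π x y = ν₁ y)

/-- Wasserstein distance for the (possibly non-symmetric) cost `d`. -/
noncomputable def wass {V : Type*} [Fintype V] (d : V → V → ℝ) (ν₀ ν₁ : V → ℝ) : ℝ :=
  sInf {r : ℝ | ∃ π : V → V → ℝ, IsCoupling π ν₀ ν₁ ∧ r = ∑ x, ∑ y, d x y * π x y}

lemma StrongDual.apply_prod_eq_sum {ι κ : Type*} [Fintype ι] [Fintype κ] [DecidableEq ι]
    [DecidableEq κ] (ℓ : StrongDual ℝ ((ι → ℝ) × (κ → ℝ) × ℝ)) (a : ι → ℝ) (b : κ → ℝ) (s : ℝ) :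
    ℓ (a, b, s) = ∑ i, a i * ℓ (Pi.single i 1, 0, 0) + ∑ j, b j * ℓ (0, Pi.single j 1, 0)
      + s * ℓ (0, 0, 1) := by
  have : (a, b, s) = ∑ i, a i • ((Pi.single i 1, 0, 0) : (ι → ℝ) × (κ → ℝ) × ℝ)
      + ∑ j, b j • ((0, Pi.single j 1, 0) : (ι → ℝ) × (κ → ℝ) × ℝ) + s • (0, 0, 1) := by
    ext <;> simp [Prod.fst_sum, Prod.snd_sum, Finset.sum_apply, Pi.single_apply]
  conv_lhs => rw [this]
  rw [map_add, map_add, map_sum, map_sum, map_smul]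
  simp only [map_smul, smul_eq_mul]

namespace IsCoupling

variable {V : Type*} [Fintype V] {π : V → V → ℝ} {ν₀ ν₁ : V → ℝ}

lemma prod (h₀ : ∀ x, 0 ≤ ν₀ x) (h₁ : ∀ y, 0 ≤ ν₁ y) (hs₀ : ∑ x, ν₀ x = 1)
    (hs₁ : ∑ y, ν₁ y = 1) : IsCoupling (fun x y => ν₀ x * ν₁ y) ν₀ ν₁ :=
  ⟨fun x y => mul_nonneg (h₀ x) (h₁ y),
   fun x => by rw [← mul_sum, hs₁, mul_one],
   fun y => by rw [← sum_mul, hs₀, one_mul]⟩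

lemma sub_le_cost (hπ : IsCoupling π ν₀ ν₁) {d : V → V → ℝ} {f : V → ℝ}
    (hf : ∀ x y, f y - f x ≤ d x y) :
    ∑ y, f y * ν₁ y - ∑ x, f x * ν₀ x ≤ ∑ x, ∑ y, d x y * π x y := by
  obtain ⟨hπ_nonneg, hπ₀, hπ₁⟩ := hπ
  calc ∑ y, f y * ν₁ y - ∑ x, f x * ν₀ x = ∑ x, ∑ y, (f y - f x) * π x y := by
        simp only [← hπ₀, ← hπ₁, mul_sum, sub_mul, sum_sub_distrib]
        rw [sum_comm]
    _ ≤ ∑ x, ∑ y, d x y * π x y := by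
        gcongr with x _ y _
        · exact hπ_nonneg x y
        · exact hf x y

end IsCoupling

section Wasserstein

variable {V : Type*} [Fintype V] {d : V → V → ℝ} {ν₀ ν₁ : V → ℝ}

lemma bddBelow_transportCosts (hd : ∀ x y, 0 ≤ d x y) :
    BddBelow {r : ℝ | ∃ π : V → V → ℝ, IsCoupling π ν₀ ν₁ ∧ r = ∑ x, ∑ y, d x y * π x y} := by
  refine ⟨0, ?_⟩
  rintro _ ⟨π, hπ, rfl⟩
  exact sum_nonneg fun x _ => sum_nonneg fun y _ => mul_nonneg (hd x y) (hπ.1 x y)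

lemma wass_nonneg (hd : ∀ x y, 0 ≤ d x y) : 0 ≤ wass d ν₀ ν₁ :=
  Real.sInf_nonneg fun _ ⟨_, hπ, hr⟩ =>
    hr ▸ sum_nonneg fun x _ => sum_nonneg fun y _ => mul_nonneg (hd x y) (hπ.1 x y)

lemma wass_le_cost (hd : ∀ x y, 0 ≤ d x y) {π : V → V → ℝ} (hπ : IsCoupling π ν₀ ν₁) :
    wass d ν₀ ν₁ ≤ ∑ x, ∑ y, d x y * π x y :=
  csInf_le (bddBelow_transportCosts hd) ⟨π, hπ, rfl⟩

lemma sub_le_wass {π : V → V → ℝ} (hπ : IsCoupling π ν₀ ν₁) {f : V → ℝ}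
    (hf : ∀ x y, f y - f x ≤ d x y) :
    ∑ y, f y * ν₁ y - ∑ x, f x * ν₀ x ≤ wass d ν₀ ν₁ :=
  le_csInf ⟨_, π, hπ, rfl⟩ fun _ ⟨_, hσ, hr⟩ => hr ▸ hσ.sub_le_cost hf

end Wasserstein

section Kantorovich

variable {V : Type*} [Fintype V] {d : V → V → ℝ}

lemma exists_lipschitz_between [Nonempty V] (hdzero : ∀ x, d x x = 0)
    (htri : ∀ x y z, d x z ≤ d x y + d y z) {φ ψ : V → ℝ} (h : ∀ x y, φ x + ψ y ≤ d x y) :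
    ∃ f : V → ℝ, (∀ x y, f y - f x ≤ d x y) ∧ (∀ y, ψ y ≤ f y) ∧ ∀ x, f x ≤ -φ x := by
  set f : V → ℝ := fun y => univ.inf' univ_nonempty fun x => d x y - φ x
  have hf_le : ∀ x y, f y ≤ d x y - φ x := fun x y => inf'_le _ (mem_univ x)
  refine ⟨f, fun x y => ?_, fun y => le_inf' _ _ fun x _ => by linarith [h x y],
    fun x => by linarith [hf_le x x, hdzero x]⟩
  obtain ⟨z, -, hz⟩ := exists_mem_eq_inf' univ_nonempty fun z => d z x - φ z
  linarith [hf_le z y, htri z x y, show f x = d z x - φ z from hz]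

def marginalsCost (d : V → V → ℝ) : (V × V → ℝ) →ₗ[ℝ] (V → ℝ) × (V → ℝ) × ℝ where
  toFun π := (fun x => ∑ y, π (x, y), fun y => ∑ x, π (x, y), ∑ x, ∑ y, d x y * π (x, y))
  map_add' π σ := by ext <;> simp [sum_add_distrib, mul_add]
  map_smul' a π := by ext <;> simp [mul_sum, mul_left_comm]

lemma exists_separation_of_lt_wass (hd : ∀ x y, 0 ≤ d x y) {ν₀ ν₁ : V → ℝ}
    (h₀ : ∀ x, 0 ≤ ν₀ x) (h₁ : ∀ y, 0 ≤ ν₁ y) (hs₀ : ∑ x, ν₀ x = 1) (hs₁ : ∑ y, ν₁ y = 1)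
    {t : ℝ} (ht : t < wass d ν₀ ν₁) :
    ∃ (G F : V → ℝ) (γ u : ℝ), (∀ x y, G x + F y + d x y * γ < u) ∧
      ∑ x, ν₀ x * G x + ∑ y, ν₁ y * F y + (∑ x, ∑ y, d x y * (ν₀ x * ν₁ y)) * γ < u ∧
      ∀ s ≤ t, u < ∑ x, ν₀ x * G x + ∑ y, ν₁ y * F y + s * γ := by
  classical
  set A := marginalsCost d '' stdSimplex ℝ (V × V)
  set B : Set ((V → ℝ) × (V → ℝ) × ℝ) := {p | p.1 = ν₀ ∧ p.2.1 = ν₁ ∧ p.2.2 ≤ t}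
  have hA : IsCompact A := (isCompact_stdSimplex ℝ (V × V)).image
    (marginalsCost d).continuous_of_finiteDimensional
  have hB : IsClosed B := (isClosed_eq continuous_fst continuous_const).inter
    ((isClosed_eq (continuous_fst.comp continuous_snd) continuous_const).inter
      (isClosed_le (continuous_snd.comp continuous_snd) continuous_const))
  have hBconv : Convex ℝ B := by
    rintro p ⟨hp₀, hp₁, hp⟩ q ⟨hq₀, hq₁, hq⟩ a b ha hb hab
    refine ⟨?_, ?_, ?_⟩
    · simp [hp₀, hq₀, ← add_smul, hab]
    · simp [hp₁, hq₁, ← add_smul, hab]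
    · simpa using (Convex.combo_le_max p.2.2 q.2.2 ha hb hab).trans (max_le hp hq)
  have hAB : Disjoint A B := by
    refine Set.disjoint_left.mpr ?_
    rintro _ ⟨π, ⟨hπ_nonneg, -⟩, rfl⟩ ⟨hπ₀, hπ₁, hcost⟩
    have hcoupling : IsCoupling (fun x y => π (x, y)) ν₀ ν₁ :=
      ⟨fun x y => hπ_nonneg _, fun x => congrFun hπ₀ x, fun y => congrFun hπ₁ y⟩
    exact (wass_le_cost hd hcoupling).trans hcost |>.not_gt ht
  obtain ⟨ℓ, u, v, hℓA, huv, hℓB⟩ :=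
    geometric_hahn_banach_compact_closed ((convex_stdSimplex ℝ _).linear_image _) hA hBconv hB hAB
  refine ⟨fun x => ℓ (Pi.single x 1, 0, 0), fun y => ℓ (0, Pi.single y 1, 0), ℓ (0, 0, 1), u,
    fun x y => ?_, ?_, fun s hs => ?_⟩
  · have hvertex :
        marginalsCost d (Pi.single (x, y) 1) = (Pi.single x 1, Pi.single y 1, d x y) := by
      ext <;> simp [marginalsCost, Pi.single_apply, Prod.ext_iff, ite_and]
    have := hℓA _ ⟨_, single_mem_stdSimplex ℝ (x, y), hvertex⟩
    rw [StrongDual.apply_prod_eq_sum ℓ] at this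
    simpa [Pi.single_apply] using this
  all_goals simp only [← StrongDual.apply_prod_eq_sum ℓ]
  · refine hℓA _ ⟨fun p => ν₀ p.1 * ν₁ p.2, ⟨fun p => mul_nonneg (h₀ _) (h₁ _), ?_⟩, ?_⟩
    · simp [Fintype.sum_prod_type, ← mul_sum, hs₀, hs₁]
    · ext <;> simp [marginalsCost, ← mul_sum, ← sum_mul, hs₀, hs₁]
  · exact huv.trans (hℓB _ ⟨rfl, rfl, hs⟩)

lemma exists_potentials_of_lt_wass (hd : ∀ x y, 0 ≤ d x y) {ν₀ ν₁ : V → ℝ}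
    (h₀ : ∀ x, 0 ≤ ν₀ x) (h₁ : ∀ y, 0 ≤ ν₁ y) (hs₀ : ∑ x, ν₀ x = 1) (hs₁ : ∑ y, ν₁ y = 1)
    {t : ℝ} (ht : t < wass d ν₀ ν₁) :
    ∃ φ ψ : V → ℝ, (∀ x y, φ x + ψ y ≤ d x y) ∧ t ≤ ∑ x, φ x * ν₀ x + ∑ y, ψ y * ν₁ y := by
  obtain ⟨G, F, γ, u, hvertex, hproduct, hray⟩ :=
    exists_separation_of_lt_wass hd h₀ h₁ hs₀ hs₁ ht
  set S := ∑ x, ν₀ x * G x + ∑ y, ν₁ y * F y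
  set c₀ := ∑ x, ∑ y, d x y * (ν₀ x * ν₁ y)
  have hγ : γ < 0 := by
    -- otherwise the ray point at height `min t c₀` would lie on the side of the product plan
    by_contra! hγ
    have := hray _ (min_le_left t c₀)
    nlinarith [mul_le_mul_of_nonneg_right (min_le_right t c₀) hγ]
  refine ⟨fun x => (G x - u) / -γ, fun y => F y / -γ, fun x y => ?_, ?_⟩
  · rw [← add_div, div_le_iff₀ (neg_pos.mpr hγ)]
    linarith [hvertex x y]
  · simp only [div_mul_eq_mul_div, ← sum_div, sub_mul, sum_sub_distrib, ← mul_sum, hs₀]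
    rw [← add_div, le_div_iff₀ (neg_pos.mpr hγ)]
    have := hray t le_rfl
    simp only [S, mul_comm (ν₀ _), mul_comm (ν₁ _)] at this
    linarith

lemma wass_le_of_forall_lipschitz [Nonempty V] (hd : ∀ x y, 0 ≤ d x y)
    (hdzero : ∀ x, d x x = 0) (htri : ∀ x y z, d x z ≤ d x y + d y z) {ν₀ ν₁ : V → ℝ}
    (h₀ : ∀ x, 0 ≤ ν₀ x) (h₁ : ∀ y, 0 ≤ ν₁ y) (hs₀ : ∑ x, ν₀ x = 1) (hs₁ : ∑ y, ν₁ y = 1)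
    {B : ℝ} (hB : ∀ f : V → ℝ, (∀ x y, f y - f x ≤ d x y) →
      ∑ y, f y * ν₁ y - ∑ x, f x * ν₀ x ≤ B) :
    wass d ν₀ ν₁ ≤ B := by
  refine forall_lt_imp_le_iff_le_of_dense.mp fun t ht => ?_
  obtain ⟨φ, ψ, hφψ, ht⟩ := exists_potentials_of_lt_wass hd h₀ h₁ hs₀ hs₁ ht
  obtain ⟨f, hf, hψf, hfφ⟩ := exists_lipschitz_between hdzero htri hφψ
  calc t ≤ ∑ x, φ x * ν₀ x + ∑ y, ψ y * ν₁ y := ht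
    _ ≤ ∑ x, -f x * ν₀ x + ∑ y, f y * ν₁ y := by
        gcongr with x _ y _
        exacts [h₀ x, le_neg.mpr (hfφ x), h₁ y, hψf y]
    _ = ∑ y, f y * ν₁ y - ∑ x, f x * ν₀ x := by simp only [neg_mul, sum_neg_distrib]; ring
    _ ≤ B := hB f hf

end Kantorovich

section Entropy

open Real

variable {V : Type*} [Fintype V] {m ρ : V → ℝ}

lemma Real.mul_le_mul_log_sub_add_exp {r : ℝ} (hr : 0 ≤ r) (u : ℝ) :
    r * u ≤ r * log r - r + exp u := by
  rcases hr.eq_or_lt with rfl | hr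
  · simpa using (exp_pos u).le
  · have h := add_one_le_exp (u - log r)
    rw [exp_sub, exp_log hr, le_div_iff₀ hr] at h
    linarith

lemma sum_exp_mul_pos (hm : ∀ x, 0 ≤ m x) (hm_ne : m ≠ 0) (g : V → ℝ) :
    0 < ∑ x, exp (g x) * m x := by
  obtain ⟨x, hx⟩ := Function.ne_iff.mp hm_ne
  exact sum_pos' (fun x _ => mul_nonneg (exp_pos _).le (hm x))
    ⟨x, mem_univ x, mul_pos (exp_pos _) ((hm x).lt_of_ne' hx)⟩

lemma sum_mul_le_entropy_add_log_sum_exp (hm : ∀ x, 0 ≤ m x) (hρ : ∀ x, 0 ≤ ρ x)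
    (hρm : ∑ x, ρ x * m x = 1) (g : V → ℝ) :
    ∑ x, g x * (ρ x * m x) ≤ ∑ x, ρ x * log (ρ x) * m x + log (∑ x, exp (g x) * m x) := by
  set Z := ∑ x, exp (g x) * m x
  have hZ : 0 < Z := sum_exp_mul_pos hm (by rintro rfl; simp at hρm) g
  have hexp : ∑ x, exp (g x - log Z) * m x = 1 := by
    simp only [exp_sub, exp_log hZ, div_mul_eq_mul_div, ← sum_div]
    exact div_self hZ.ne'
  calc ∑ x, g x * (ρ x * m x) = ∑ x, ρ x * (g x - log Z) * m x + log Z := by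
        simp only [mul_sub, sub_mul, sum_sub_distrib, mul_right_comm _ (log Z), ← sum_mul, hρm]
        simp only [mul_left_comm (g _), mul_assoc]
        ring
    _ ≤ ∑ x, (ρ x * log (ρ x) - ρ x + exp (g x - log Z)) * m x + log Z := by
        gcongr with x _
        exacts [hm x, Real.mul_le_mul_log_sub_add_exp (hρ x) _]
    _ = ∑ x, ρ x * log (ρ x) * m x + log Z := by
        simp only [add_mul, sub_mul, sum_add_distrib, sum_sub_distrib, hρm, hexp]
        ring

lemma entropy_nonneg (hm : ∀ x, 0 ≤ m x) (hsm : ∑ x, m x = 1) (hρ : ∀ x, 0 ≤ ρ x)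
    (hρm : ∑ x, ρ x * m x = 1) : 0 ≤ ∑ x, ρ x * log (ρ x) * m x := by
  simpa [hsm] using sum_mul_le_entropy_add_log_sum_exp hm hρ hρm 0

noncomputable def gibbsDensity (m g : V → ℝ) (x : V) : ℝ :=
  exp (g x) / ∑ y, exp (g y) * m y

variable {g : V → ℝ} (hZ : 0 < ∑ x, exp (g x) * m x)
include hZ

lemma gibbsDensity_nonneg (x : V) : 0 ≤ gibbsDensity m g x :=
  div_nonneg (exp_pos _).le hZ.le

lemma sum_gibbsDensity_mul : ∑ x, gibbsDensity m g x * m x = 1 := by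
  simp only [gibbsDensity, div_mul_eq_mul_div, ← sum_div]
  exact div_self hZ.ne'

lemma entropy_gibbsDensity :
    ∑ x, gibbsDensity m g x * log (gibbsDensity m g x) * m x
      = ∑ x, g x * (gibbsDensity m g x * m x) - log (∑ x, exp (g x) * m x) := by
  have hlog : ∀ x, log (gibbsDensity m g x) = g x - log (∑ x, exp (g x) * m x) := fun x => by
    rw [gibbsDensity, log_div (exp_pos _).ne' hZ.ne', log_exp]
  simp only [hlog, mul_sub, sub_mul, sum_sub_distrib, mul_right_comm _ (log _), ← sum_mul,
    sum_gibbsDensity_mul hZ, one_mul]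
  simp only [mul_comm (gibbsDensity m g _) (g _), mul_assoc]

end Entropy

section BobkovGoetze

open Real

variable {V : Type*} [Fintype V] {d : V → V → ℝ} {m : V → ℝ} {c : ℝ}

lemma laplace_le_of_transport (hm : ∀ x, 0 ≤ m x) (hsm : ∑ x, m x = 1) (hc : 0 < c)
    (H : ∀ ρ : V → ℝ, (∀ x, 0 ≤ ρ x) → ∑ x, ρ x * m x = 1 →
      wass d m (fun x => ρ x * m x) ^ 2 ≤ (2 / c) * ∑ x, ρ x * log (ρ x) * m x)
    {f : V → ℝ} (hf : ∀ x y, f y - f x ≤ d x y) (hf₀ : ∑ x, f x * m x = 0)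
    {l : ℝ} (hl : 0 ≤ l) :
    ∑ x, exp (l * f x) * m x ≤ exp (l ^ 2 / (2 * c)) := by
  have hZ := sum_exp_mul_pos hm (by rintro rfl; simp at hsm) fun x => l * f x
  set ρ := gibbsDensity m fun x => l * f x
  have hρ := gibbsDensity_nonneg hZ
  have hρm := sum_gibbsDensity_mul hZ
  set α := ∑ x, f x * (ρ x * m x)
  have hαW : α ≤ wass d m fun x => ρ x * m x := by
    have hπ := IsCoupling.prod hm (fun x => mul_nonneg (hρ x) (hm x)) hsm hρm
    simpa [hf₀] using sub_le_wass hπ hf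
  have hent : ∑ x, ρ x * log (ρ x) * m x = l * α - log (∑ x, exp (l * f x) * m x) := by
    rw [entropy_gibbsDensity hZ, mul_sum]
    simp only [mul_assoc, ρ]
  have hW := H ρ hρ hρm
  rw [hent] at hW
  rw [← log_le_iff_le_exp hZ]
  rcases le_or_gt α 0 with hα | hα
  · have hent_nonneg := (mul_nonneg_iff_of_pos_left (by positivity)).mp ((sq_nonneg _).trans hW)
    have : 0 ≤ l ^ 2 / (2 * c) := by positivity
    nlinarith
  · have hent_ge : c * α ^ 2 / 2 ≤ l * α - log (∑ x, exp (l * f x) * m x) := by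
      have := (pow_le_pow_left₀ hα.le hαW 2).trans hW
      rw [div_mul_eq_mul_div, le_div_iff₀ hc] at this
      linarith
    rw [le_div_iff₀ (by positivity)]
    nlinarith [sq_nonneg (l - c * α)]

lemma sub_le_sqrt_entropy_of_laplace_le (hm : ∀ x, 0 ≤ m x) (hsm : ∑ x, m x = 1) (hc : 0 < c)
    (H : ∀ f : V → ℝ, (∀ x y, f y - f x ≤ d x y) → ∑ x, f x * m x = 0 →
      ∀ l : ℝ, 0 ≤ l → ∑ x, exp (l * f x) * m x ≤ exp (l ^ 2 / (2 * c)))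
    {ρ : V → ℝ} (hρ : ∀ x, 0 ≤ ρ x) (hρm : ∑ x, ρ x * m x = 1)
    {h : V → ℝ} (hh : ∀ x y, h y - h x ≤ d x y) :
    ∑ y, h y * (ρ y * m y) - ∑ x, h x * m x ≤ √(2 / c * ∑ x, ρ x * log (ρ x) * m x) := by
  set α := ∑ y, h y * (ρ y * m y) - ∑ x, h x * m x
  rcases le_or_gt α 0 with hα | hα
  · exact hα.trans (sqrt_nonneg _)
  refine le_sqrt_of_sq_le ?_
  set f : V → ℝ := fun x => h x - ∑ z, h z * m z
  have hf : ∀ x y, f y - f x ≤ d x y := fun x y => by simpa [f] using hh x y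
  have hf₀ : ∑ x, f x * m x = 0 := by simp [f, sub_mul, sum_sub_distrib, ← mul_sum, hsm]
  have hfα : ∑ x, (c * α * f x) * (ρ x * m x) = c * α * α := by
    simp [f, α, mul_sub, sub_mul, sum_sub_distrib, ← mul_sum, hρm, mul_assoc]
  have hgibbs := sum_mul_le_entropy_add_log_sum_exp hm hρ hρm fun x => c * α * f x
  have hlaplace := (log_le_iff_le_exp (sum_exp_mul_pos hm (by rintro rfl; simp at hsm) _)).mpr
    (H f hf hf₀ (c * α) (by positivity))
  rw [hfα] at hgibbs
  have hsq : (c * α) ^ 2 / (2 * c) = c * α ^ 2 / 2 := by field_simp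
  rw [div_mul_eq_mul_div, le_div_iff₀ hc]
  nlinarith

lemma transport_of_laplace_le [Nonempty V] (hd : ∀ x y, 0 ≤ d x y) (hdzero : ∀ x, d x x = 0)
    (htri : ∀ x y z, d x z ≤ d x y + d y z) (hm : ∀ x, 0 ≤ m x) (hsm : ∑ x, m x = 1)
    (hc : 0 < c)
    (H : ∀ f : V → ℝ, (∀ x y, f y - f x ≤ d x y) → ∑ x, f x * m x = 0 →
      ∀ l : ℝ, 0 ≤ l → ∑ x, exp (l * f x) * m x ≤ exp (l ^ 2 / (2 * c)))
    {ρ : V → ℝ} (hρ : ∀ x, 0 ≤ ρ x) (hρm : ∑ x, ρ x * m x = 1) :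
    wass d m (fun x => ρ x * m x) ^ 2 ≤ (2 / c) * ∑ x, ρ x * log (ρ x) * m x := by
  have hW := wass_le_of_forall_lipschitz hd hdzero htri hm (fun x => mul_nonneg (hρ x) (hm x))
    hsm hρm fun h hh => sub_le_sqrt_entropy_of_laplace_le hm hsm hc H hρ hρm hh
  calc wass d m (fun x => ρ x * m x) ^ 2 ≤ √(2 / c * ∑ x, ρ x * log (ρ x) * m x) ^ 2 :=
        pow_le_pow_left₀ (wass_nonneg hd) hW 2
    _ = 2 / c * ∑ x, ρ x * log (ρ x) * m x :=
        sq_sqrt (mul_nonneg (by positivity) (entropy_nonneg hm hsm hρ hρm))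

end BobkovGoetze

theorem bobkov_goetze_general {V : Type*} [Fintype V] [Nonempty V]
    (d : V → V → ℝ) (m : V → ℝ) (c : ℝ)
    (hdnn : ∀ x y, 0 ≤ d x y) (hdzero : ∀ x, d x x = 0)
    (htri : ∀ x y z, d x z ≤ d x y + d y z)
    (hmpos : ∀ x, 0 < m x) (hprob : ∑ x, m x = 1) (hc : 0 < c) :
    (∀ ρ : V → ℝ, (∀ x, 0 ≤ ρ x) → ∑ x, ρ x * m x = 1 →
        wass d m (fun x => ρ x * m x) ^ 2 ≤ (2 / c) * ∑ x, ρ x * Real.log (ρ x) * m x)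
      ↔ (∀ f : V → ℝ, (∀ x y, f y - f x ≤ d x y) → (∑ x, f x * m x = 0) →
          ∀ l : ℝ, 0 ≤ l → ∑ x, Real.exp (l * f x) * m x ≤ Real.exp (l ^ 2 / (2 * c))) :=
  have hm : ∀ x, 0 ≤ m x := fun x => (hmpos x).le
  ⟨fun H _ hf hf₀ _ hl => laplace_le_of_transport hm hprob hc H hf hf₀ hl,
   fun H _ hρ hρm => transport_of_laplace_le hdnn hdzero htri hm hprob hc H hρ hρm⟩

/-- Bobkov–Götze type criterion: the transportation-entropy inequality is equivalent to a
Gaussian bound on the Laplace functional. -/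
theorem bobkov_goetze {V : Type*} [Fintype V] [Nonempty V]
    (d : V → V → ℝ) (m : V → ℝ) (c : ℝ)
    (hdnn : ∀ x y, 0 ≤ d x y) (hdzero : ∀ x, d x x = 0)
    (hdpos : ∀ x y, x ≠ y → 0 < d x y)
    (htri : ∀ x y z, d x z ≤ d x y + d y z)
    (hmpos : ∀ x, 0 < m x) (hprob : ∑ x, m x = 1) (hc : 0 < c) :
    (∀ ρ : V → ℝ, (∀ x, 0 ≤ ρ x) → ∑ x, ρ x * m x = 1 →
        wass d m (fun x => ρ x * m x) ^ 2 ≤ (2 / c) * ∑ x, ρ x * Real.log (ρ x) * m x)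
      ↔ (∀ f : V → ℝ, (∀ x y, f y - f x ≤ d x y) → (∑ x, f x * m x = 0) →
          ∀ l : ℝ, 0 ≤ l → ∑ x, Real.exp (l * f x) * m x ≤ Real.exp (l ^ 2 / (2 * c))) :=
  bobkov_goetze_general d m c hdnn hdzero htri hmpos hprob hc
end
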